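/- Every digit string that either is the single digit 0 or has first digit different from 0 appears exactly once in the grid: there is exactly one pair (i,j) of natural numbers with G(i,j) equal to the given string. -/

import Mathlib

abbrev Digit := Fin 3

/-- Helper for `addTwo`, acting on the reversed (least significant digit first) string:
replace each digit `d` by `d - 1 (mod 3)` up to and including the first digit 0;
if no digit 0 occurs, a digit 0 is first prepended at the most significant end
(and then becomes 2). -/
def addTwoAux : List Digit → List Digit
  | [] => [2]
  | d :: rest => if d = 0 then (d + 2) :: rest else (d + 2) :: addTwoAux rest

/-- Adding two in base 3/2: all digits at or to the right of the rightmost 0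
(including that 0) are decreased by 1 modulo 3; if there is no 0, a 0 is first
prepended. -/
def addTwo (w : List Digit) : List Digit := (addTwoAux w.reverse).reverse

open Fin.NatCast in
/-- Binary representation of `j` (digits 0 and 1, most significant first, no leading
zeros), with `binRep 0 = [0]`. -/
def binRep (j : ℕ) : List Digit :=
  if j = 0 then [0] else (Nat.digits 2 j).reverse.map (fun d => (d : Digit))

/-- The grid: row 0 consists of the binary representations in increasing order, and
each subsequent row is obtained entrywise by adding two in base 3/2. -/
def G : ℕ → ℕ → List Digit
  | 0, j => binRep j
  | i + 1, j => addTwo (G i j)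

/-!
Drop the artificial distinction between `[0]` and the empty string: on strings without a leading
zero (the empty one included) `addTwo` is injective, its image consists exactly of the strings
containing a digit 2, and binary strings are exactly those that contain none. So every such
string is reached from a unique binary string by a unique number of steps. Existence terminates
because `addTwo` increases the value of a string read in base 3.
-/

open Function Set

section IterateGrid

variable {α ι : Type*} {f : α → α} {g : ι → α} {S : Set α}

theorem injective_iterate_apply (hf : MapsTo f S S) (hfS : InjOn f S) (hg : Injective g)
    (hgS : range g ⊆ S) (hdisj : Disjoint (range g) (f '' S)) :
    Injective fun p : ℕ × ι => f^[p.1] (g p.2) := by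
  have hmem (i : ℕ) (j : ι) : f^[i] (g j) ∈ S := hf.iterate i (hgS (mem_range_self j))
  have hne (i : ℕ) (j j' : ι) : f^[i + 1] (g j) ≠ g j' := by
    rw [iterate_succ_apply']
    exact fun h => hdisj.ne_of_mem (mem_range_self j') (mem_image_of_mem f (hmem i j)) h.symm
  rintro ⟨i, j⟩ ⟨i', j'⟩ h
  simp only at h
  induction i generalizing i' with
  | zero =>
    cases i' with
    | zero => simpa using hg h
    | succ i' => exact absurd h.symm (hne i' j' j)
  | succ i ih =>
    cases i' with
    | zero => exact absurd h (hne i j j')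
    | succ i' =>
      simp only [iterate_succ_apply'] at h
      simpa using ih i' (hfS (hmem i j) (hmem i' j') h)

theorem exists_iterate_apply_eq (hcover : S ⊆ range g ∪ f '' S) (μ : α → ℕ)
    (hμ : ∀ x ∈ S, μ x < μ (f x)) {y : α} (hy : y ∈ S) :
    ∃ p : ℕ × ι, f^[p.1] (g p.2) = y := by
  induction hn : μ y using Nat.strong_induction_on generalizing y with
  | _ n ih =>
    obtain ⟨j, rfl⟩ | ⟨x, hx, rfl⟩ := hcover hy
    · exact ⟨(0, j), rfl⟩
    · obtain ⟨⟨i, j⟩, rfl⟩ := ih (μ x) (hn ▸ hμ x hx) hx rfl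
      exact ⟨(i + 1, j), iterate_succ_apply' ..⟩

end IterateGrid

lemma addTwoAux_ne_nil (r : List Digit) : addTwoAux r ≠ [] := by
  cases r <;> simp only [addTwoAux] <;> try split_ifs
  all_goals simp

lemma two_mem_addTwoAux (r : List Digit) : (2 : Digit) ∈ addTwoAux r := by
  induction r with
  | nil => simp [addTwoAux]
  | cons d rest ih => unfold addTwoAux; split_ifs with hd <;> simp_all

lemma getLast?_addTwoAux (r : List Digit) :
    (addTwoAux r).getLast? = r.getLast? ∨ (addTwoAux r).getLast? = some 2 := by
  induction r with
  | nil => simp [addTwoAux]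
  | cons d rest ih =>
    unfold addTwoAux
    split_ifs with hd
    · subst hd
      rw [List.getLast?_cons, List.getLast?_cons]
      cases rest.getLast? <;> simp
    · rw [List.getLast?_cons, List.getLast?_cons]
      have := addTwoAux_ne_nil rest
      cases h : rest.getLast? <;> rcases ih with ih | ih <;> simp_all

lemma injOn_addTwoAux : InjOn addTwoAux {r | r.getLast? ≠ some 0} := by
  intro r hr s hs h
  simp only [mem_ofPred_eq] at hr hs
  have htail {a : Digit} {l : List Digit} (h : (a :: l).getLast? ≠ some 0) :
      l.getLast? ≠ some 0 :=
    fun h' => h (List.mem_getLast?_cons h')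
  induction r generalizing s with
  | nil =>
    cases s with
    | nil => rfl
    | cons e rest =>
      unfold addTwoAux at h
      split_ifs at h with he <;> simp_all [addTwoAux_ne_nil]
  | cons d rest ih =>
    cases s with
    | nil =>
      unfold addTwoAux at h
      split_ifs at h with he <;> simp_all [eq_comm, addTwoAux_ne_nil]
    | cons e rest' =>
      unfold addTwoAux at h
      split_ifs at h with hd he he
      iterate 3 simp_all
      obtain ⟨rfl, htails⟩ : d = e ∧ addTwoAux rest = addTwoAux rest' := by simpa using h
      rw [ih (htail hr) (htail hs) htails]

lemma exists_addTwoAux_eq {r : List Digit} (hr : r.getLast? ≠ some 0) (h2 : (2 : Digit) ∈ r) :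
    ∃ s, s.getLast? ≠ some 0 ∧ addTwoAux s = r := by
  induction r with
  | nil => simp at h2
  | cons d rest ih =>
    by_cases hd : d = 2
    · subst hd
      cases rest with
      | nil => exact ⟨[], by simp, rfl⟩
      | cons e rest => exact ⟨0 :: e :: rest, by simpa using hr, rfl⟩
    · have h2' : (2 : Digit) ∈ rest := by simpa [Ne.symm hd] using h2
      obtain ⟨s, hs, rfl⟩ := ih (fun h' => hr (List.mem_getLast?_cons h')) h2'
      have hd1 : d + 1 ≠ 0 := by fin_cases d <;> simp_all
      refine ⟨(d + 1) :: s, fun h' => ?_, ?_⟩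
      · rw [List.getLast?_cons] at h'
        cases h : s.getLast? <;> simp_all
      · rw [addTwoAux, if_neg hd1, add_assoc, show (1 + 2 : Digit) = 0 from rfl, add_zero]

lemma ofDigits_lt_ofDigits_addTwoAux (r : List Digit) :
    Nat.ofDigits 3 (r.map Fin.val) < Nat.ofDigits 3 ((addTwoAux r).map Fin.val) := by
  induction r with
  | nil => simp [addTwoAux]
  | cons d rest ih =>
    unfold addTwoAux
    split_ifs with hd
    · subst hd; simp [Nat.ofDigits_cons]
    · have : (d + 2).val + 1 = d.val := by fin_cases d <;> simp_all
      simp only [List.map_cons, Nat.ofDigits_cons]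
      omega

def noLeadingZero : Set (List Digit) := {w | w.head? ≠ some 0}

lemma mem_noLeadingZero_iff_getLast?_reverse {w : List Digit} :
    w ∈ noLeadingZero ↔ w.reverse.getLast? ≠ some 0 := by
  rw [List.getLast?_reverse]; rfl

lemma two_mem_addTwo (w : List Digit) : (2 : Digit) ∈ addTwo w :=
  List.mem_reverse.2 (two_mem_addTwoAux _)

lemma mapsTo_addTwo : MapsTo addTwo noLeadingZero noLeadingZero := by
  intro w hw
  rw [mem_noLeadingZero_iff_getLast?_reverse, addTwo, List.reverse_reverse]
  rw [mem_noLeadingZero_iff_getLast?_reverse] at hw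
  rcases getLast?_addTwoAux w.reverse with h | h <;> rw [h]
  · exact hw
  · simp

lemma injOn_addTwo : InjOn addTwo noLeadingZero := fun _ hu _ hv h =>
  List.reverse_injective <| injOn_addTwoAux (mem_noLeadingZero_iff_getLast?_reverse.1 hu)
    (mem_noLeadingZero_iff_getLast?_reverse.1 hv) (List.reverse_injective h)

lemma mem_image_addTwo {w : List Digit} (hw : w ∈ noLeadingZero) (h2 : (2 : Digit) ∈ w) :
    w ∈ addTwo '' noLeadingZero := by
  obtain ⟨s, hs, hsw⟩ := exists_addTwoAux_eq (mem_noLeadingZero_iff_getLast?_reverse.1 hw)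
    (List.mem_reverse.2 h2)
  refine ⟨s.reverse, mem_noLeadingZero_iff_getLast?_reverse.2 (by simpa using hs), ?_⟩
  rw [addTwo, List.reverse_reverse, hsw, List.reverse_reverse]

lemma ofDigits_lt_ofDigits_addTwo (w : List Digit) :
    Nat.ofDigits 3 (w.reverse.map Fin.val) < Nat.ofDigits 3 ((addTwo w).reverse.map Fin.val) := by
  simpa [addTwo] using ofDigits_lt_ofDigits_addTwoAux w.reverse

open Fin.NatCast in
def binDigits (j : ℕ) : List Digit := (Nat.digits 2 j).reverse.map Nat.cast

lemma map_val_binDigits (j : ℕ) : (binDigits j).map Fin.val = (Nat.digits 2 j).reverse := by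
  rw [binDigits, List.map_map, List.map_congr_left, List.map_id]
  intro d hd
  have := Nat.digits_lt_base (by norm_num) (List.mem_reverse.1 hd)
  exact Fin.val_cast_of_lt (by omega)

lemma binDigits_injective : Injective binDigits := fun j j' h => by
  simpa [map_val_binDigits] using congrArg (List.map Fin.val) h

lemma two_notMem_binDigits (j : ℕ) : (2 : Digit) ∉ binDigits j := fun h => by
  have := List.mem_map_of_mem (f := Fin.val) h
  rw [map_val_binDigits, List.mem_reverse] at this
  exact absurd (Nat.digits_lt_base (by norm_num) this) (by decide)

lemma binDigits_mem_noLeadingZero (j : ℕ) : binDigits j ∈ noLeadingZero := fun h => by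
  have hlast := congrArg (Option.map Fin.val) h
  rw [← List.head?_map, map_val_binDigits, List.head?_reverse] at hlast
  rcases eq_or_ne j 0 with rfl | hj
  · simp at hlast
  · rw [List.getLast?_eq_some_getLast (Nat.digits_ne_nil_iff_ne_zero.2 hj)] at hlast
    exact Nat.getLast_digit_ne_zero 2 hj (Option.some_injective _ hlast)

lemma exists_binDigits_eq {w : List Digit} (hw : w ∈ noLeadingZero) (h2 : (2 : Digit) ∉ w) :
    ∃ j, binDigits j = w := by
  refine ⟨Nat.ofDigits 2 (w.map Fin.val).reverse, List.map_injective_iff.2 Fin.val_injective ?_⟩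
  rw [map_val_binDigits, Nat.digits_ofDigits _ (by norm_num), List.reverse_reverse]
  · simp only [List.mem_reverse, List.mem_map]
    rintro _ ⟨d, hd, rfl⟩
    fin_cases d <;> simp_all
  · intro hne
    rw [List.getLast_reverse, List.head_map]
    exact fun h0 => hw <| by
      rw [List.head?_eq_some_head (by simpa using hne), Fin.val_eq_zero_iff.1 h0]

lemma disjoint_range_binDigits_image_addTwo :
    Disjoint (range binDigits) (addTwo '' noLeadingZero) := by
  rw [disjoint_left]
  rintro _ ⟨j, rfl⟩ ⟨w, -, hw⟩
  exact two_notMem_binDigits j (hw ▸ two_mem_addTwo w)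

lemma noLeadingZero_subset_range_binDigits_union_image_addTwo :
    noLeadingZero ⊆ range binDigits ∪ addTwo '' noLeadingZero := by
  intro w hw
  by_cases h2 : (2 : Digit) ∈ w
  · exact Or.inr (mem_image_addTwo hw h2)
  · exact Or.inl (exists_binDigits_eq hw h2)

def nilToZero (w : List Digit) : List Digit := if w = [] then [0] else w

lemma addTwo_nilToZero (w : List Digit) : addTwo (nilToZero w) = addTwo w := by
  unfold nilToZero; split_ifs with h <;> simp [h]; rfl

lemma injOn_nilToZero : InjOn nilToZero noLeadingZero := by
  intro u hu v hv h
  simp only [nilToZero, noLeadingZero, mem_ofPred_eq] at *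
  split_ifs at h <;> subst_vars <;> simp_all

open Fin.NatCast in
lemma binRep_eq_nilToZero (j : ℕ) : binRep j = nilToZero (binDigits j) := by
  rw [binRep, nilToZero, binDigits]
  simp only [bind_pure_comp, List.map_eq_map, List.map_id', List.map_eq_nil_iff,
    List.reverse_eq_nil_iff, Nat.digits_eq_nil_iff_eq_zero]

lemma G_eq_nilToZero (i j : ℕ) : G i j = nilToZero (addTwo^[i] (binDigits j)) := by
  induction i with
  | zero => exact binRep_eq_nilToZero j
  | succ i ih =>
    rw [G, ih, addTwo_nilToZero, iterate_succ_apply', nilToZero,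
      if_neg (List.ne_nil_of_mem (two_mem_addTwo _))]

/-- Every digit string that either is the single digit 0 or has first digit different
from 0 appears exactly once in the grid. -/
theorem grid_unique (w : List Digit)
    (h : w = [0] ∨ ∃ d : Digit, ∃ l : List Digit, w = d :: l ∧ d ≠ 0) :
    ∃! p : ℕ × ℕ, G p.1 p.2 = w := by
  obtain ⟨v, hv, rfl⟩ : ∃ v ∈ noLeadingZero, nilToZero v = w := by
    rcases h with rfl | ⟨d, l, rfl, hd⟩
    · exact ⟨[], by simp [noLeadingZero], rfl⟩
    · exact ⟨d :: l, by simpa [noLeadingZero] using hd, rfl⟩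
  have hG (p : ℕ × ℕ) : G p.1 p.2 = nilToZero v ↔ addTwo^[p.1] (binDigits p.2) = v := by
    rw [G_eq_nilToZero]
    exact injOn_nilToZero.eq_iff (mapsTo_addTwo.iterate p.1 (binDigits_mem_noLeadingZero p.2)) hv
  simp only [hG]
  obtain ⟨p, hp⟩ :=
    exists_iterate_apply_eq noLeadingZero_subset_range_binDigits_union_image_addTwo
      (fun u => Nat.ofDigits 3 (u.reverse.map Fin.val)) (fun u _ => ofDigits_lt_ofDigits_addTwo u)
      hv
  refine ⟨p, hp, fun q hq => ?_⟩
  exact injective_iterate_apply mapsTo_addTwo injOn_addTwo binDigits_injective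
    (range_subset_iff.2 binDigits_mem_noLeadingZero) disjoint_range_binDigits_image_addTwo
    (hq.trans hp.symm)
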